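/- arXiv:1008.4557 — 4 statements merged into one kernel-verified Lean document; each statement's English description precedes it below -/
import Mathlib

section
/- Let σ be a 321-avoiding permutation of {1,...,n} that contains at least one 21-pattern. Let σ(i) be the largest 2-element of σ and let σ(j) be the largest 1-element of σ. Then the pair of positions (i, j) is a 21-pattern of σ, i.e., i < j and σ(i) > σ(j). -/
/-- A permutation of `Fin n` is 321-avoiding if there are no positions
`i < j < k` with `σ i > σ j > σ k`. -/
def Avoids321 {n : ℕ} (σ : Equiv.Perm (Fin n)) : Prop :=
  ∀ i j k : Fin n, i < j → j < k → ¬(σ j < σ i ∧ σ k < σ j)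

/-- If a 321-avoiding permutation contains a 21-pattern, and `σ i` is its largest
2-element and `σ j` its largest 1-element, then `(i, j)` is a 21-pattern:
`i < j` and `σ i > σ j`. -/
theorem largest_two_largest_one_form_pattern {n : ℕ} (σ : Equiv.Perm (Fin n))
    (hσ : Avoids321 σ)
    (hpat : ∃ x y : Fin n, x < y ∧ σ y < σ x)
    (i j : Fin n)
    -- σ i is a 2-element and is the largest 2-element
    (hi2 : ∃ k : Fin n, i < k ∧ σ k < σ i)
    (hiMax : ∀ i' : Fin n, (∃ k : Fin n, i' < k ∧ σ k < σ i') → σ i' ≤ σ i)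
    -- σ j is a 1-element and is the largest 1-element
    (hj1 : ∃ l : Fin n, l < j ∧ σ j < σ l)
    (hjMax : ∀ j' : Fin n, (∃ l : Fin n, l < j' ∧ σ j' < σ l) → σ j' ≤ σ j) :
    i < j ∧ σ j < σ i := by
  obtain ⟨l, hlj, hjl⟩ := hj1
  obtain ⟨k, hik, hki⟩ := hi2
  have hli : σ l ≤ σ i := hiMax l ⟨j, hlj, hjl⟩
  have hji : σ j < σ i := lt_of_lt_of_le hjl hli
  refine ⟨?_, hji⟩
  rcases lt_trichotomy i j with h | h | h
  · exact h
  · exact absurd (h ▸ hji) (lt_irrefl _)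
  · -- j < i, derive contradiction using pattern l < j < k
    exfalso
    have hjk : j < k := lt_trans h hik
    have hkj : σ k ≤ σ j := hjMax k ⟨i, hik, hki⟩
    have hkj' : σ k < σ j := lt_of_le_of_ne hkj (fun he => (ne_of_lt hjk) (σ.injective he).symm)
    exact hσ l j k hlj hjk ⟨hjl, hkj'⟩
end

section
/- Let σ be a 321-avoiding permutation of {1,...,n}, let (s, t) be a 21-pattern of σ, and suppose there exists at least one 21-pattern (x, y) of σ with σ(x) < σ(s) and σ(y) < σ(t). Let S be the set of all such 21-patterns (x, y). Let σ(i) be the largest value occurring as first entry (the 2-element) of a member of S, and let σ(j) be the largest value occurring as second entry (the 1-element) of a member of S. Then the pair of positions (i, j) is itself a 21-pattern of σ, i.e., i < j and σ(i) > σ(j). -/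
/-- Let `(s, t)` be a 21-pattern of a 321-avoiding permutation `σ`, and let `S` be
the (nonempty) set of 21-patterns `(x, y)` with `σ x < σ s` and `σ y < σ t`.
If `σ i` is the largest 2-element occurring in members of `S` and `σ j` is the
largest 1-element occurring in members of `S`, then `(i, j)` is a 21-pattern. -/
theorem largest_in_S_form_pattern {n : ℕ} (σ : Equiv.Perm (Fin n))
    (hσ : Avoids321 σ)
    (s t : Fin n) (hst : s < t ∧ σ t < σ s)
    (S : Set (Fin n × Fin n))
    (hS : ∀ p : Fin n × Fin n,
      p ∈ S ↔ p.1 < p.2 ∧ σ p.2 < σ p.1 ∧ σ p.1 < σ s ∧ σ p.2 < σ t)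
    (hSne : S.Nonempty)
    (i j : Fin n)
    -- σ i is the largest 2-element occurring as first entry of a member of S
    (hi : ∃ y : Fin n, (i, y) ∈ S)
    (hiMax : ∀ p : Fin n × Fin n, p ∈ S → σ p.1 ≤ σ i)
    -- σ j is the largest 1-element occurring as second entry of a member of S
    (hj : ∃ x : Fin n, (x, j) ∈ S)
    (hjMax : ∀ p : Fin n × Fin n, p ∈ S → σ p.2 ≤ σ j) :
    i < j ∧ σ j < σ i := by
  obtain ⟨y, hy⟩ := hi
  obtain ⟨x, hx⟩ := hj
  have hyS := (hS (i, y)).mp hy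
  have hxS := (hS (x, j)).mp hx
  have hxi : σ x ≤ σ i := hiMax (x, j) hx
  have hyj : σ y ≤ σ j := hjMax (i, y) hy
  have hji : σ j < σ i := lt_of_lt_of_le hxS.2.1 hxi
  refine ⟨?_, hji⟩
  by_contra hlt
  push_neg at hlt
  rcases lt_or_eq_of_le hlt with h | h
  · -- j < i, so x < j < i < y; pattern x j y
    have hyj' : σ y < σ j := by
      rcases lt_or_eq_of_le hyj with h' | h'
      · exact h'
      · exact absurd (σ.injective h') (by
          intro he; rw [he] at hyS; exact absurd (h.trans hyS.1) (lt_irrefl _))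
    exact hσ x j y hxS.1 (h.trans hyS.1) ⟨hxS.2.1, hyj'⟩
  · -- j = i : pattern x i y with x < i < y
    subst h
    exact absurd hji (lt_irrefl _)
end

section
/- Let σ be a 321-avoiding permutation of {1,...,n} that contains at least one 21-pattern. Let σ(i) be the smallest 2-element of σ and let σ(j) be the smallest 1-element of σ. Then the pair of positions (i, j) is a 21-pattern of σ, i.e., i < j and σ(i) > σ(j). -/
/-- If a 321-avoiding permutation contains a 21-pattern, and `σ i` is its smallest
2-element and `σ j` its smallest 1-element, then `(i, j)` is a 21-pattern:
`i < j` and `σ i > σ j`. -/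
theorem smallest_two_smallest_one_form_pattern {n : ℕ} (σ : Equiv.Perm (Fin n))
    (hσ : Avoids321 σ)
    (hpat : ∃ x y : Fin n, x < y ∧ σ y < σ x)
    (i j : Fin n)
    -- σ i is a 2-element and is the smallest 2-element
    (hi2 : ∃ k : Fin n, i < k ∧ σ k < σ i)
    (hiMin : ∀ i' : Fin n, (∃ k : Fin n, i' < k ∧ σ k < σ i') → σ i ≤ σ i')
    -- σ j is a 1-element and is the smallest 1-element
    (hj1 : ∃ l : Fin n, l < j ∧ σ j < σ l)
    (hjMin : ∀ j' : Fin n, (∃ l : Fin n, l < j' ∧ σ j' < σ l) → σ j ≤ σ j') :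
    i < j ∧ σ j < σ i := by
  obtain ⟨k, hik, hki⟩ := hi2
  obtain ⟨l, hlj, hjl⟩ := hj1
  have hji : σ j < σ i := lt_of_le_of_lt (hjMin k ⟨i, hik, hki⟩) hki
  refine ⟨?_, hji⟩
  by_contra h
  push_neg at h
  have hil : σ i ≤ σ l := hiMin l ⟨j, hlj, hjl⟩
  have hli : l < i := lt_of_lt_of_le hlj h
  have hil' : σ i < σ l := lt_of_le_of_ne hil (fun e => absurd (σ.injective e) (ne_of_gt hli))
  exact hσ l i k hli hik ⟨hil', hki⟩
end

section
/- Let σ be a 321-avoiding permutation of {1,...,n}, let (s, t) be a 21-pattern of σ, and suppose there exists at least one 21-pattern (x, y) of σ with σ(x) > σ(s) and σ(y) > σ(t). Let S be the set of all such 21-patterns (x, y). Let σ(i) be the smallest value occurring as first entry (the 2-element) of a member of S, and let σ(j) be the smallest value occurring as second entry (the 1-element) of a member of S. Then the pair of positions (i, j) is itself a 21-pattern of σ, i.e., i < j and σ(i) > σ(j). -/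
/-- Let `(s, t)` be a 21-pattern of a 321-avoiding permutation `σ`, and let `S` be
the (nonempty) set of 21-patterns `(x, y)` with `σ x > σ s` and `σ y > σ t`.
If `σ i` is the smallest 2-element occurring in members of `S` and `σ j` is the
smallest 1-element occurring in members of `S`, then `(i, j)` is a 21-pattern. -/
theorem smallest_in_S_form_pattern {n : ℕ} (σ : Equiv.Perm (Fin n))
    (hσ : Avoids321 σ)
    (s t : Fin n) (hst : s < t ∧ σ t < σ s)
    (S : Set (Fin n × Fin n))
    (hS : ∀ p : Fin n × Fin n,
      p ∈ S ↔ p.1 < p.2 ∧ σ p.2 < σ p.1 ∧ σ s < σ p.1 ∧ σ t < σ p.2)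
    (hSne : S.Nonempty)
    (i j : Fin n)
    -- σ i is the smallest 2-element occurring as first entry of a member of S
    (hi : ∃ y : Fin n, (i, y) ∈ S)
    (hiMin : ∀ p : Fin n × Fin n, p ∈ S → σ i ≤ σ p.1)
    -- σ j is the smallest 1-element occurring as second entry of a member of S
    (hj : ∃ x : Fin n, (x, j) ∈ S)
    (hjMin : ∀ p : Fin n × Fin n, p ∈ S → σ j ≤ σ p.2) :
    i < j ∧ σ j < σ i := by
  obtain ⟨y, hy⟩ := hi
  obtain ⟨x, hx⟩ := hj
  have hyS := (hS (i, y)).1 hy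
  have hxS := (hS (x, j)).1 hx
  -- σ j ≤ σ y < σ i
  have hji : σ j < σ i := lt_of_le_of_lt (hjMin (i, y) hy) hyS.2.1
  refine ⟨?_, hji⟩
  by_contra hle
  push_neg at hle  -- j ≤ i
  have hxi : x < i := lt_of_lt_of_le hxS.1 hle
  have hiy : i < y := hyS.1
  have hix : σ i < σ x := by
    have h := hiMin (x, j) hx
    rcases h.lt_or_eq with h | h
    · exact h
    · exact absurd (σ.injective h) (ne_of_gt hxi)
  exact hσ x i y hxi hiy ⟨hix, hyS.2.1⟩
end
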